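/- arXiv:2003.11389 — 5 statements merged into one kernel-verified Lean document; each statement's English description precedes it below -/
import Mathlib

section
/- A finite-index subgroup of a group with Property FW also has Property FW. -/
open Pointwise

/-- A group `Γ` has Property FW if for every `Γ`-set `E` and every subset `X ⊆ E`
such that the symmetric difference `X △ γX` is finite for every `γ ∈ Γ`, there exists
a `Γ`-invariant subset `Y ⊆ E` with `X △ Y` finite. -/
def HasPropertyFW (Γ : Type*) [Group Γ] : Prop :=
  ∀ (E : Type) [MulAction Γ E] (X : Set E),
    (∀ γ : Γ, (symmDiff X (γ • X)).Finite) →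
    ∃ Y : Set E, (∀ γ : Γ, γ • Y = Y) ∧ (symmDiff X Y).Finite

/-!
Induce the `H`-set `E` up to the `Γ`-set `Γ ×_H E`, a union of `[Γ : H]` copies of `E`.
If `X ⊆ E` is almost `H`-invariant, the union of the copies of `X` is almost `Γ`-invariant,
because the finite index makes the union finite. Property FW of `Γ` corrects it to a
`Γ`-invariant set, and the fibre of that set over the trivial coset is an `H`-invariant set
commensurate with `X`.
-/

theorem HasPropertyFW.exists_smul_eq_of_small {Γ : Type*} [Group Γ] (hfw : HasPropertyFW Γ)
    {E : Type*} [MulAction Γ E] [Small.{0} E] (X : Set E)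
    (hX : ∀ γ : Γ, (symmDiff X (γ • X)).Finite) :
    ∃ Y : Set E, (∀ γ : Γ, γ • Y = Y) ∧ (symmDiff X Y).Finite := by
  let f := equivShrink.{0} E
  obtain ⟨Y, hYinv, hYfin⟩ := hfw (Shrink E) (f '' X) fun γ => by
    rw [← Set.image_smul_comm f γ X (equivShrink_smul γ), ← Set.image_symmDiff f.injective]
    exact (hX γ).image f
  refine ⟨f.symm '' Y, fun γ => ?_, ?_⟩
  · rw [← Set.image_smul_comm f.symm γ Y (equivShrink_symm_smul γ), hYinv]
  · rw [← f.symm_image_image X, ← Set.image_symmDiff f.symm.injective]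
    exact hYfin.image f.symm

namespace Subgroup

variable {Γ : Type*} [Group Γ] (H : Subgroup Γ)

/-- Defined by `γ * q.out = (γ • q).out * quotientCocycle H γ q`. -/
noncomputable def quotientCocycle (γ : Γ) (q : Γ ⧸ H) : H :=
  ⟨(γ • q).out⁻¹ * (γ * q.out), QuotientGroup.eq.mp <| by
    rw [QuotientGroup.out_eq', ← smul_eq_mul, ← MulAction.Quotient.smul_mk, QuotientGroup.out_eq']⟩

theorem coe_quotientCocycle (γ : Γ) (q : Γ ⧸ H) :
    (H.quotientCocycle γ q : Γ) = (γ • q).out⁻¹ * (γ * q.out) := rfl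

theorem quotientCocycle_one (q : Γ ⧸ H) : H.quotientCocycle 1 q = 1 := by
  ext; simp [coe_quotientCocycle]

theorem quotientCocycle_mul (γ δ : Γ) (q : Γ ⧸ H) :
    H.quotientCocycle (γ * δ) q = H.quotientCocycle γ (δ • q) * H.quotientCocycle δ q := by
  ext; simp only [coe_quotientCocycle, coe_mul, mul_smul]; group

theorem smul_conj_out_self (h : H) (q : Γ ⧸ H) : (q.out * h * q.out⁻¹) • q = q := by
  conv_rhs => rw [← QuotientGroup.out_eq' q]
  rw [← QuotientGroup.out_eq' q, MulAction.Quotient.smul_mk]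
  simp

theorem quotientCocycle_conj_out (h : H) (q : Γ ⧸ H) :
    H.quotientCocycle (q.out * h * q.out⁻¹) q = h := by
  ext; rw [coe_quotientCocycle, smul_conj_out_self]; group

/-- The induced `Γ`-set `Γ ×_H E`, identified with `(Γ ⧸ H) × E` through the section
`Quotient.out`; the action is twisted by `quotientCocycle`. -/
@[ext]
structure InducedSet (E : Type*) where
  coset : Γ ⧸ H
  point : E

variable {H} {E : Type*}

namespace InducedSet

theorem mk_injective (q : Γ ⧸ H) : Function.Injective (mk q : E → H.InducedSet E) :=
  fun _ _ hxy => congrArg point hxy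

instance [Finite (Γ ⧸ H)] [Small.{0} E] : Small.{0} (H.InducedSet E) :=
  small_of_injective (f := fun p : H.InducedSet E => (p.coset, p.point))
    fun _ _ hpq => InducedSet.ext (congrArg Prod.fst hpq) (congrArg Prod.snd hpq)

end InducedSet

variable [MulAction H E]

noncomputable instance : MulAction Γ (H.InducedSet E) where
  smul γ p := ⟨γ • p.coset, H.quotientCocycle γ p.coset • p.point⟩
  one_smul p := by
    show InducedSet.mk _ _ = p
    rw [one_smul, quotientCocycle_one, one_smul]
  mul_smul γ δ p := by
    show InducedSet.mk _ _ = InducedSet.mk _ _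
    rw [mul_smul, quotientCocycle_mul, mul_smul]
    rfl

namespace InducedSet

theorem smul_mk (γ : Γ) (q : Γ ⧸ H) (x : E) :
    γ • (mk q x : H.InducedSet E) = mk (γ • q) (H.quotientCocycle γ q • x) := rfl

theorem finite_symmDiff_preimage_point_smul [Finite (Γ ⧸ H)] {X : Set E}
    (hX : ∀ h : H, (symmDiff X (h • X)).Finite) (γ : Γ) :
    (symmDiff (point ⁻¹' X : Set (H.InducedSet E)) (γ • point ⁻¹' X)).Finite := by
  have mem_smul (p : H.InducedSet E) :
      p ∈ γ • (point ⁻¹' X : Set (H.InducedSet E)) ↔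
        p.point ∈ (H.quotientCocycle γ⁻¹ p.coset)⁻¹ • X := by
    rw [Set.mem_smul_set_iff_inv_smul_mem, Set.mem_smul_set_iff_inv_smul_mem, inv_inv]
    rfl
  refine (Set.finite_iUnion fun q =>
    (hX (H.quotientCocycle γ⁻¹ q)⁻¹).image (mk q)).subset fun p hp => ?_
  refine Set.mem_iUnion.mpr ⟨p.coset, p.point, ?_, rfl⟩
  simpa only [Set.mem_symmDiff, mem_smul, Set.mem_preimage] using hp

theorem exists_smul_mk_eq (q : Γ ⧸ H) (h : H) :
    ∃ γ : Γ, ∀ x : E, γ • (mk q x : H.InducedSet E) = mk q (h • x) :=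
  ⟨q.out * h * q.out⁻¹, fun x => by rw [smul_mk, smul_conj_out_self, quotientCocycle_conj_out]⟩

theorem smul_preimage_mk_eq {Y : Set (H.InducedSet E)} (hY : ∀ γ : Γ, γ • Y = Y)
    (q : Γ ⧸ H) (h : H) : h • (mk q ⁻¹' Y) = mk q ⁻¹' Y := by
  obtain ⟨γ, hγ⟩ := exists_smul_mk_eq (E := E) q h⁻¹
  ext x
  rw [Set.mem_smul_set_iff_inv_smul_mem, Set.mem_preimage, Set.mem_preimage, ← hγ,
    ← Set.mem_inv_smul_set_iff, hY]

end InducedSet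

end Subgroup

/-- A finite-index subgroup of a group with Property FW also has Property FW. -/
theorem stmt_1 {Γ : Type*} [Group Γ] (hfw : HasPropertyFW Γ)
    (H : Subgroup Γ) (hfi : H.FiniteIndex) :
    HasPropertyFW H := by
  intro E _ X hX
  have : Finite (Γ ⧸ H) := H.finite_quotient_of_finiteIndex
  obtain ⟨Y, hYinv, hYfin⟩ := hfw.exists_smul_eq_of_small _
    (Subgroup.InducedSet.finite_symmDiff_preimage_point_smul (H := H) hX)
  refine ⟨Subgroup.InducedSet.mk (1 : Γ) ⁻¹' Y,
    Subgroup.InducedSet.smul_preimage_mk_eq hYinv _, ?_⟩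
  have := hYfin.preimage (Subgroup.InducedSet.mk_injective ((1 : Γ) : Γ ⧸ H)).injOn
  rwa [Set.preimage_symmDiff] at this
end

section
/- (B.H. Neumann's lemma) If a group G acts on a set E such that every orbit is infinite, then for every finite subset F ⊆ E and every finite subset F' ⊆ E there exists g ∈ G with gF ∩ F' = ∅. -/
open Pointwise

/-- B.H. Neumann's lemma: if a group `G` acts on a set `E` with all orbits infinite,
then any finite subset `F` can be translated off any finite subset `F'`. -/
theorem stmt_5 {G E : Type*} [Group G] [MulAction G E]
    (horb : ∀ x : E, (MulAction.orbit G x).Infinite)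
    (F F' : Set E) (hF : F.Finite) (hF' : F'.Finite) :
    ∃ g : G, Disjoint (g • F) F' := by
  by_contra hcon
  push_neg at hcon
  classical
  -- For each g there exist x ∈ F with g • x ∈ F'
  have key : ∀ g : G, ∃ x ∈ F, g • x ∈ F' := by
    intro g
    have := hcon g
    rw [Set.not_disjoint_iff] at this
    obtain ⟨y, hy1, hy2⟩ := this
    obtain ⟨x, hx, rfl⟩ := hy1
    exact ⟨x, hx, hy2⟩
  -- index type: pairs (x, y)
  let H : E × E → Subgroup G := fun p => MulAction.stabilizer G p.1
  let g : E × E → G := fun p =>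
    if h : ∃ k : G, k • p.1 = p.2 then h.choose else 1
  let s : Finset (E × E) := hF.toFinset ×ˢ hF'.toFinset
  have hcovers : ⋃ i ∈ s, g i • (H i : Set G) = Set.univ := by
    ext k
    simp only [Set.mem_univ, iff_true, Set.mem_iUnion]
    obtain ⟨x, hx, hkx⟩ := key k
    refine ⟨(x, k • x), ?_, ?_⟩
    · simp [s, hx, hkx]
    · have hex : ∃ j : G, j • (x, k • x).1 = (x, k • x).2 := ⟨k, rfl⟩
      rw [mem_leftCoset_iff]
      simp only [g, dif_pos hex]
      have := hex.choose_spec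
      simp only [H, SetLike.mem_coe, MulAction.mem_stabilizer_iff]
      simp only at this
      rw [mul_smul, inv_smul_eq_iff]
      exact this.symm
  obtain ⟨i, _, hfi, _⟩ := Subgroup.exists_index_le_card_of_leftCoset_cover hcovers
  -- stabilizer has finite index ⇒ orbit is finite, contradiction
  have : Finite (G ⧸ MulAction.stabilizer G i.1) := @Subgroup.finite_quotient_of_finiteIndex _ _ _ hfi
  have : (MulAction.orbit G i.1).Finite := by
    have e := MulAction.orbitEquivQuotientStabilizer G i.1
    exact Set.finite_coe_iff.mp (Finite.of_equiv _ e.symm)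
  exact horb i.1 this
end

section
/- Let Γ be a group with Property FW, acting on a set E, and suppose X ⊆ E satisfies X △ γX finite for all γ ∈ Γ. Then there exists a Γ-invariant subset Y ⊆ E with X △ Y finite and such that for every finite subset F ⊆ Y there exists g ∈ Γ with gF ⊆ X. -/
/-!
Property FW provides an invariant `Y` with `X △ Y` finite. Discard from `Y` the points whose orbit
is finite but not contained in `X`: these lie in the finitely many finite orbits meeting the finite
set `Y \ X`, so the result is still invariant and almost equal to `X`. A finite subset `F` of what
remains can be moved into `X` by a single `g`: by Neumann's lemma, `g` can be chosen to move the
infinite-orbit points of `F` off `Y \ X` (and they stay in `Y`), while the other points of `F` have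
their whole orbit in `X`.
-/

open Pointwise

namespace MulAction

variable {Γ E : Type*} [Group Γ] [MulAction Γ E]

theorem finiteIndex_stabilizer_iff_finite_orbit {a : E} :
    (stabilizer Γ a).FiniteIndex ↔ (orbit Γ a).Finite := by
  rw [Subgroup.finiteIndex_iff_finite_quotient, ← (orbitEquivQuotientStabilizer Γ a).finite_iff,
    Set.finite_coe_iff]

/-- B. H. Neumann's lemma. If every translate of `A` met `B`, the group would be covered by the
finitely many cosets `{γ | γ • a = b}` (`a ∈ A`, `b ∈ B`) of stabilizers of points of `A`, so one of
these stabilizers would have finite index. -/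
theorem exists_smul_disjoint_of_infinite_orbit {A B : Set E} (hA : A.Finite) (hB : B.Finite)
    (hAinf : ∀ a ∈ A, (orbit Γ a).Infinite) : ∃ g : Γ, Disjoint (g • A) B := by
  classical
  by_contra! hmeet
  have hcoset : ∀ i : E × E, ∃ t : Γ,
      ∀ γ : Γ, γ • i.1 = i.2 → γ ∈ t • (stabilizer Γ i.1 : Set Γ) := by
    rintro ⟨a, b⟩
    by_cases hb : b ∈ orbit Γ a
    · obtain ⟨t, rfl⟩ := hb
      refine ⟨t, fun γ hγ => Set.mem_smul_set_iff_inv_smul_mem.mpr ?_⟩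
      simp only [SetLike.mem_coe, mem_stabilizer_iff, smul_eq_mul, mul_smul, hγ, inv_smul_smul]
    · exact ⟨1, fun γ hγ => absurd ⟨γ, hγ⟩ hb⟩
  choose t ht using hcoset
  have hcover : ⋃ i ∈ hA.toFinset ×ˢ hB.toFinset, t i • (stabilizer Γ i.1 : Set Γ) = Set.univ := by
    refine Set.eq_univ_of_forall fun γ => ?_
    obtain ⟨_, ⟨a, ha, rfl⟩, hb⟩ := Set.not_disjoint_iff.mp (hmeet γ)
    exact Set.mem_biUnion (x := (a, γ • a)) (by simp [ha, hb]) (ht _ γ rfl)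
  obtain ⟨i, hi, hfin⟩ := Subgroup.exists_finiteIndex_of_leftCoset_cover hcover
  exact hAinf i.1 (by simpa using (Finset.mem_product.mp hi).1)
    (finiteIndex_stabilizer_iff_finite_orbit.mp hfin)

variable (Γ) in
def translatablePart (X Y : Set E) : Set E :=
  {y ∈ Y | (orbit Γ y).Infinite ∨ orbit Γ y ⊆ X}

variable {X Y : Set E}

theorem smul_translatablePart (hY : ∀ γ : Γ, γ • Y = Y) (γ : Γ) :
    γ • translatablePart Γ X Y = translatablePart Γ X Y := by
  ext x
  simp only [Set.mem_smul_set_iff_inv_smul_mem, translatablePart, Set.mem_sep_iff, orbit_smul,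
    ← Set.mem_smul_set_iff_inv_smul_mem (A := Y), hY]

theorem finite_diff_translatablePart (hY : ∀ γ : Γ, γ • Y = Y) (hYX : (Y \ X).Finite) :
    (Y \ translatablePart Γ X Y).Finite := by
  have hS : {d ∈ Y \ X | (orbit Γ d).Finite}.Finite := hYX.subset (Set.sep_subset _ _)
  refine (hS.biUnion fun d hd => hd.2).subset ?_
  rintro y ⟨hy, hyT⟩
  obtain ⟨hfin, hnsub⟩ : (orbit Γ y).Finite ∧ ¬orbit Γ y ⊆ X := by
    simpa [translatablePart, hy, not_or] using hyT
  obtain ⟨_, ⟨γ, rfl⟩, hγX⟩ := Set.not_subset.mp hnsub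
  refine Set.mem_biUnion ⟨⟨hY γ ▸ Set.smul_mem_smul_set hy, hγX⟩, ?_⟩
    (mem_orbit_symm.mpr (mem_orbit y γ))
  rwa [orbit_smul]

theorem finite_symmDiff_translatablePart (hY : ∀ γ : Γ, γ • Y = Y) (hXY : (symmDiff X Y).Finite) :
    (symmDiff X (translatablePart Γ X Y)).Finite := by
  have hYX : (Y \ X).Finite := hXY.subset fun _ hx => Or.inr hx
  refine (hXY.union (finite_diff_translatablePart hY hYX)).subset ?_
  have hsub : translatablePart Γ X Y ⊆ Y := Set.sep_subset _ _
  rw [← symmDiff_of_ge hsub]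
  exact symmDiff_triangle _ _ _

theorem exists_smul_subset_of_subset_translatablePart (hY : ∀ γ : Γ, γ • Y = Y)
    (hYX : (Y \ X).Finite) {F : Set E} (hF : F ⊆ translatablePart Γ X Y) (hFfin : F.Finite) :
    ∃ g : Γ, g • F ⊆ X := by
  obtain ⟨g, hg⟩ := exists_smul_disjoint_of_infinite_orbit (Γ := Γ)
    (hFfin.subset (Set.sep_subset F fun x => (orbit Γ x).Infinite)) hYX fun _ hx => hx.2
  refine ⟨g, Set.smul_set_subset_iff.mpr fun x hxF => ?_⟩
  obtain ⟨hxY, hx⟩ := hF hxF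
  by_cases hinf : (orbit Γ x).Infinite
  · by_contra hgx
    exact Set.disjoint_left.mp hg (Set.smul_mem_smul_set ⟨hxF, hinf⟩)
      ⟨hY g ▸ Set.smul_mem_smul_set hxY, hgx⟩
  · exact hx.resolve_left hinf (mem_orbit x g)

end MulAction

/-- For a group with Property FW, the invariant set  can be chosen so that every
finite subset of  can be translated into . -/
theorem stmt_6 {Γ : Type*} [Group Γ] (hfw : HasPropertyFW Γ)
    (E : Type) [MulAction Γ E] (X : Set E)
    (hX : ∀ γ : Γ, (symmDiff X (γ • X)).Finite) :
    ∃ Y : Set E, (∀ γ : Γ, γ • Y = Y) ∧ (symmDiff X Y).Finite ∧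
      ∀ F : Set E, F ⊆ Y → F.Finite → ∃ g : Γ, g • F ⊆ X := by
  obtain ⟨Y, hY, hXY⟩ := hfw E X hX
  have hYX : (Y \ X).Finite := hXY.subset fun _ hx => Or.inr hx
  exact ⟨MulAction.translatablePart Γ X Y, MulAction.smul_translatablePart hY,
    MulAction.finite_symmDiff_translatablePart hY hXY,
    fun _ hF hFfin => MulAction.exists_smul_subset_of_subset_translatablePart hY hYX hF hFfin⟩
end

section
/- A partial action of a group Γ on a set X admits a globalization: there is a Γ-set Y, an injection i : X → Y, such that for all g ∈ Γ and x, x' ∈ X, (x, x') is in the graph of α(g) if and only if g·i(x) = i(x'), and moreover every Γ-orbit in Y meets i(X). -/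
/-- A partial action of a group on a set, described via the graphs of the partial
bijections: `α(1) = id`, `α(g⁻¹) = α(g)⁻¹`, and `α(gh)` extends `α(g) ∘ α(h)`. -/
structure PartialAction (Γ : Type*) [Group Γ] (X : Type*) where
  graph : Γ → Set (X × X)
  one_def : graph 1 = {p | p.1 = p.2}
  inv_def : ∀ g : Γ, ∀ x x' : X, (x, x') ∈ graph g ↔ (x', x) ∈ graph g⁻¹
  functional : ∀ g : Γ, ∀ x x' x'' : X,
    (x, x') ∈ graph g → (x, x'') ∈ graph g → x' = x''
  comp_le : ∀ g h : Γ, ∀ x x' x'' : X,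
    (x, x') ∈ graph h → (x', x'') ∈ graph g → (x, x'') ∈ graph (g * h)

def globSetoid {Γ X : Type} [Group Γ] (α : PartialAction Γ X) : Setoid (Γ × X) where
  r p q := (p.2, q.2) ∈ α.graph (q.1⁻¹ * p.1)
  iseqv := by
    constructor
    · intro p
      simp [α.one_def]
    · intro p q h
      have := (α.inv_def _ _ _).mp h
      simpa using this
    · intro p q r h1 h2
      have := α.comp_le _ _ _ _ _ h1 h2
      have e : r.1⁻¹ * q.1 * (q.1⁻¹ * p.1) = r.1⁻¹ * p.1 := by group
      rwa [e] at this

/-- Every partial action admits an essential globalization: a genuine action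
(given by `σ` satisfying the action axioms) on a set `Y`, together with an injection
`i : X → Y`, such that `(x, x')` is in the graph of `α(g)` iff `g • i x = i x'`,
and every orbit meets `i(X)`. -/
theorem stmt_8 {Γ X : Type} [Group Γ] (α : PartialAction Γ X) :
    ∃ (Y : Type) (σ : Γ → Y → Y) (i : X → Y),
      (∀ y : Y, σ 1 y = y) ∧
      (∀ g h : Γ, ∀ y : Y, σ (g * h) y = σ g (σ h y)) ∧
      Function.Injective i ∧
      (∀ g : Γ, ∀ x x' : X, (x, x') ∈ α.graph g ↔ σ g (i x) = i x') ∧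
      (∀ y : Y, ∃ (g : Γ) (x : X), σ g (i x) = y) := by
  classical
  refine ⟨Quotient (globSetoid α), ?_, fun x => Quotient.mk _ (1, x), ?_, ?_, ?_, ?_, ?_⟩
  · exact fun k => Quotient.map (fun p => (k * p.1, p.2)) (by
      intro p q h
      show (p.2, q.2) ∈ α.graph ((k * q.1)⁻¹ * (k * p.1))
      have e : (k * q.1)⁻¹ * (k * p.1) = q.1⁻¹ * p.1 := by group
      rw [e]; exact h)
  · intro y
    induction y using Quotient.inductionOn with
    | h p => exact Quotient.sound (by show _ ∈ α.graph _; simp [α.one_def])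
  · intro g h y
    induction y using Quotient.inductionOn with
    | h p => exact Quotient.sound (by show _ ∈ α.graph _; simp [mul_assoc, α.one_def])
  · intro x x' h
    have := Quotient.exact h
    have h2 : (x, x') ∈ α.graph (1⁻¹ * (1:Γ)) := this
    rw [show (1:Γ)⁻¹ * 1 = 1 by group, α.one_def] at h2
    exact h2
  · intro g x x'
    constructor
    · intro h
      refine Quotient.sound ?_
      show (x, x') ∈ α.graph (1⁻¹ * (g * 1))
      simpa using h
    · intro h
      have := Quotient.exact h
      have h2 : (x, x') ∈ α.graph (1⁻¹ * (g * 1)) := this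
      simpa using h2
  · intro y
    induction y using Quotient.inductionOn with
    | h p =>
      refine ⟨p.1, p.2, Quotient.sound ?_⟩
      show _ ∈ α.graph _
      simp [α.one_def]
end

section
/- If Γ has Property FW and α is a cofinite partial action of Γ on a set X (each α(g) defined on a cofinite subset), then in the universal globalization Y ⊇ X of α, there is a Γ-invariant subset Z ⊆ Y with Z △ X finite. -/
open Pointwise

/-- A partial action is cofinite if each `α(g)` is defined on a cofinite subset. -/
def PartialAction.Cofinite {Γ X : Type} [Group Γ] (α : PartialAction Γ X) : Prop :=
  ∀ g : Γ, {x : X | ¬ ∃ x' : X, (x, x') ∈ α.graph g}.Finite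

/-- If `Γ` has Property FW and `α` is a cofinite partial action of `Γ` on `X`, then
in any (universal) globalization `Y ⊇ X` of `α` — i.e. a global action `σ` with an
embedding `i : X → Y` restricting to `α` and meeting every orbit — there is a
`Γ`-invariant subset `Z ⊆ Y` with `Z △ X` finite. -/
theorem stmt_18 {Γ X : Type} [Group Γ] (hfw : HasPropertyFW Γ)
    (α : PartialAction Γ X) (hcof : α.Cofinite)
    (Y : Type) (σ : Γ → Y → Y) (i : X → Y)
    (hact₁ : ∀ y : Y, σ 1 y = y)
    (hact : ∀ g h : Γ, ∀ y : Y, σ (g * h) y = σ g (σ h y))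
    (hinj : Function.Injective i)
    (hglob : ∀ g : Γ, ∀ x x' : X, (x, x') ∈ α.graph g ↔ σ g (i x) = i x')
    (hess : ∀ y : Y, ∃ (g : Γ) (x : X), σ g (i x) = y) :
    ∃ Z : Set Y, (∀ g : Γ, σ g '' Z = Z) ∧ (symmDiff Z (Set.range i)).Finite := by
  letI : SMul Γ Y := ⟨σ⟩
  letI : MulAction Γ Y := { one_smul := hact₁, mul_smul := hact }
  have hσ : ∀ g : Γ, ∀ y : Y, g • y = σ g y := fun _ _ => rfl
  have key : ∀ γ : Γ, (symmDiff (Set.range i) (γ • Set.range i)).Finite := by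
    intro γ
    rw [symmDiff_def]
    apply Set.Finite.union
    · apply Set.Finite.subset ((hcof γ⁻¹).image i)
      rintro y ⟨⟨x, rfl⟩, hy⟩
      refine ⟨x, fun ⟨x', hx'⟩ => hy ?_, rfl⟩
      have h1 : σ γ⁻¹ (i x) = i x' := (hglob γ⁻¹ x x').mp hx'
      refine ⟨i x', ⟨x', rfl⟩, ?_⟩
      show σ γ (i x') = i x
      rw [← h1, ← hact, mul_inv_cancel, hact₁]
    · apply Set.Finite.subset ((hcof γ).image (σ γ ∘ i))
      rintro y ⟨⟨_, ⟨x, rfl⟩, rfl⟩, hy⟩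
      exact ⟨x, fun ⟨x', hx'⟩ => hy ⟨x', ((hglob γ x x').mp hx').symm⟩, rfl⟩
  obtain ⟨Z, hZinv, hZfin⟩ := hfw Y (Set.range i) key
  exact ⟨Z, fun g => hZinv g, by rwa [symmDiff_comm]⟩
end
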